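/- With T the maximal-label functional subgraph of the de Bruijn graph of span n rooted at the maximum vertex m, call u restricted if γ(u) < α(u) and call u a floor vertex if g(u) = ε. Then any directed cycle of T containing exactly ℓ restricted vertices contains exactly ℓ floor vertices. -/

import Mathlib

/-! Walking once around the cycle, the successor `w = u.tail ++ [c]` of a vertex `u` is a floor
vertex exactly when `u` is restricted, i.e. when `c < α u`, so the shift `i ↦ i + 1` matches the
restricted positions of the cycle with its floor positions.

All three cases of the height lemma rest on the maximality of `m`: whenever `r ++ [x]` is a factor
of some vertex and `r ++ [y]` is a prefix of `m`, then `x ≤ y`, because that factor extends to a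
vertex that is `≤ m`. Hence `c > α u` is impossible; if `c < α u`, a nonempty `g w = r ++ [c]`
would make `r` a suffix of `g u`, so that `r ++ [α u]` is a factor of `m` beating its prefix
`r ++ [c]`; and if `c = α u`, then `g u ++ [c]` is a nonempty prefix of `m` ending `w`. -/

open Finset List

theorem Finset.card_filter_range_eq_of_iff_succ {p : ℕ} {P Q : ℕ → Prop} [DecidablePred P]
    [DecidablePred Q] (hwrap : Q p ↔ Q 0) (hPQ : ∀ i, P i ↔ Q (i + 1)) :
    #{i ∈ range p | P i} = #{i ∈ range p | Q i} := by
  simp only [card_filter, hPQ]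
  have hsucc := sum_range_succ (fun i => if Q i then 1 else 0) p
  have hsucc' := sum_range_succ' (fun i => if Q i then 1 else 0) p
  simp only [hwrap] at hsucc
  omega

namespace List

section Suffix

variable {α : Type*} {s t : List α}

theorem IsSuffix.concat (h : s <:+ t) (a : α) : s ++ [a] <:+ t ++ [a] :=
  suffix_concat_iff.mpr (.inr ⟨s, rfl, h⟩)

theorem IsSuffix.tail_of_length_lt (h : s <:+ t) (hlen : s.length < t.length) : s <:+ t.tail :=
  suffix_of_suffix_length_le h (tail_suffix t) (by rw [length_tail]; omega)

end Suffix

theorem le_of_append_singleton_prefix_of_le {A : Type*} [LinearOrder A] {c x y : List A}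
    {a b : A} (hx : c ++ [a] <+: x) (hy : c ++ [b] <+: y) (hyx : y ≤ x) : b ≤ a := by
  obtain ⟨r, rfl⟩ := hx
  obtain ⟨s, rfl⟩ := hy
  by_contra! hab
  have hlt : c ++ [a] ++ r < c ++ [b] ++ s := by
    simpa using append_left_lt (l₁ := c) (Lex.rel hab : a :: r < b :: s)
  exact not_lt_of_ge hyx hlt

end List

def IsLongestPrefixSuffix {A : Type*} (m u s : List A) : Prop :=
  s <+: m ∧ s <:+ u ∧ ∀ t : List A, t <+: m → t <:+ u → t.length ≤ s.length

section Height

variable {A : Type*} {V : Set (List A)} {m u s t : List A} {a c : A}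

theorem IsLongestPrefixSuffix.ne_nil_of_append_prefix
    (ht : IsLongestPrefixSuffix m (u.tail ++ [a]) t) (hsa : s ++ [a] <+: m)
    (hsu : s <:+ u.tail) : t ≠ [] := by
  rintro rfl
  simpa using ht.2.2 _ hsa (hsu.concat a)

variable [LinearOrder A]

theorem le_of_infix_of_prefix_max
    (hext : ∀ x ∈ V, ∀ s : List A, s <:+ x → ∃ y ∈ V, s <+: y) (hmax : ∀ y ∈ V, y ≤ m)
    {x : List A} (hx : x ∈ V) (hb : s ++ [c] <:+: x) (ha : s ++ [a] <+: m) : c ≤ a := by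
  obtain ⟨p, q, rfl⟩ := hb
  obtain ⟨y, hy, hqy⟩ := hext _ hx (s ++ [c] ++ q) ⟨p, by simp⟩
  exact le_of_append_singleton_prefix_of_le ha ((prefix_append _ q).trans hqy) (hmax y hy)

theorem IsLongestPrefixSuffix.eq_nil_of_lt
    (hext : ∀ x ∈ V, ∀ s : List A, s <:+ x → ∃ y ∈ V, s <+: y) (hmax : ∀ y ∈ V, y ≤ m)
    (hm : m ∈ V) (hs : IsLongestPrefixSuffix m u s)
    (ht : IsLongestPrefixSuffix m (u.tail ++ [c]) t) (hsa : s ++ [a] <+: m) (hlt : c < a) :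
    t = [] := by
  obtain ⟨htm, htu, -⟩ := ht
  obtain hnil | ⟨r, rfl, hru⟩ := suffix_concat_iff.mp htu
  · exact hnil
  have hru' : r <:+ u := hru.trans (tail_suffix u)
  have hrs : r <:+ s :=
    suffix_of_suffix_length_le hru' hs.2.1 (hs.2.2 r ((prefix_append r [c]).trans htm) hru')
  have hac : a ≤ c :=
    le_of_infix_of_prefix_max hext hmax hm ((hrs.concat a).isInfix.trans hsa.isInfix) htm
  exact absurd hlt (not_lt_of_ge hac)

theorem IsLongestPrefixSuffix.lt_iff_eq_nil
    (hext : ∀ x ∈ V, ∀ s : List A, s <:+ x → ∃ y ∈ V, s <+: y) (hmax : ∀ y ∈ V, y ≤ m)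
    (hm : m ∈ V) (hs : IsLongestPrefixSuffix m u s)
    (ht : IsLongestPrefixSuffix m (u.tail ++ [c]) t) (hsa : s ++ [a] <+: m)
    (hlen : s.length < u.length) (hw : u.tail ++ [c] ∈ V) : c < a ↔ t = [] := by
  have hsu : s <:+ u.tail := hs.2.1.tail_of_length_lt hlen
  refine ⟨hs.eq_nil_of_lt hext hmax hm ht hsa, fun hnil => ?_⟩
  obtain hlt | rfl := (le_of_infix_of_prefix_max hext hmax hw (hsu.concat c).isInfix hsa).lt_or_eq
  · exact hlt
  · exact absurd hnil (ht.ne_nil_of_append_prefix hsa hsu)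

end Height

theorem cycle_restricted_eq_floor {A : Type*} [LinearOrder A] (n p : ℕ)
    (L V : Set (List A)) (m : List A) (g : List A → List A) (α γ : List A → A) (v : ℕ → List A)
    (hV : ∀ u ∈ V, u.length = n)
    (hext : ∀ x ∈ V, ∀ s : List A, s <:+ x → ∃ y ∈ V, s <+: y)
    (hm : m ∈ V)
    (hmax : ∀ u ∈ V, u = m ∨ List.Lex (· < ·) u m)
    (hg : ∀ u ∈ V, g u <+: m ∧ g u <:+ u ∧
      ∀ s : List A, s <+: m → s <:+ u → s.length ≤ (g u).length)
    (hglen : ∀ u ∈ V, u ≠ m → (g u).length < n)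
    (hα : ∀ u ∈ V, u ≠ m → g u ++ [α u] <+: m)
    -- v is a cycle of T of length p: each arc is the maximal-label outgoing arc
    (hvV : ∀ i, v i ∈ V ∧ v i ≠ m)
    (hstep : ∀ i, (v i) ++ [γ (v i)] ∈ L ∧ v (i + 1) = (v i).tail ++ [γ (v i)])
    (hper : ∀ i, v (i + p) = v i) :
    ((Finset.range p).filter fun i => γ (v i) < α (v i)).card =
    ((Finset.range p).filter fun i => g (v i) = []).card := by
  have hle : ∀ u ∈ V, u ≤ m := fun u hu =>
    (hmax u hu).elim (fun h => h.le) fun h => le_of_lt (lex_lt.mp h)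
  refine card_filter_range_eq_of_iff_succ (by rw [← hper 0, zero_add]) fun i => ?_
  obtain ⟨hu, hum⟩ := hvV i
  have hw := (hvV (i + 1)).1
  rw [(hstep i).2] at hw ⊢
  exact IsLongestPrefixSuffix.lt_iff_eq_nil hext hle hm (hg _ hu) (hg _ hw) (hα _ hu hum)
    (hV _ hu ▸ hglen _ hu hum) hw
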